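/- Let $B$ be a real normed space, $H$ a Hilbert space, $T: B \to H$ bounded linear, $t > 0$, and let $k(x,y) = \exp(-\frac{t}{2}\|T(x-y)\|_H^2)$. Suppose $\mathcal{H}$ is a reproducing kernel Hilbert space of functions on $B$ with reproducing kernel $k$. Then every $f \in \mathcal{H}$ satisfies $|f(x) - f(y)| \le \sqrt{t}\,\|T\|\,\|f\|_{\mathcal{H}}\,\|x - y\|_B$ for all $x, y \in B$; that is, $f$ is Lipschitz with constant at most $\sqrt{t}\,\|T\|\,\|f\|_{\mathcal{H}}$. -/
import Mathlib


open scoped RealInnerProductSpace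

/-- RKHS with Gaussian kernel, modeled via a feature map `Φ : B → ℋ` with
`⟪Φ x, Φ y⟫ = k(x,y)`; elements `f ∈ ℋ` act as functions via `x ↦ ⟪f, Φ x⟫`
(the reproducing property). -/
theorem stmt_15 (B H ℋ : Type*) [NormedAddCommGroup B] [NormedSpace ℝ B]
    [NormedAddCommGroup H] [InnerProductSpace ℝ H] [CompleteSpace H]
    [NormedAddCommGroup ℋ] [InnerProductSpace ℝ ℋ] [CompleteSpace ℋ]
    (T : B →L[ℝ] H) (t : ℝ) (ht : 0 < t)
    (Φ : B → ℋ)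
    (hΦ : ∀ x y : B, ⟪Φ x, Φ y⟫ = Real.exp (-(t / 2) * ‖T (x - y)‖ ^ 2)) :
    ∀ (f : ℋ) (x y : B),
      |⟪f, Φ x⟫ - ⟪f, Φ y⟫| ≤ Real.sqrt t * ‖T‖ * ‖f‖ * ‖x - y‖ := by
  intro f x y
  set c : ℝ := ‖T (x - y)‖ ^ 2 with hc
  have hc0 : 0 ≤ c := sq_nonneg _
  have hself : ∀ z : B, ⟪Φ z, Φ z⟫ = 1 := by
    intro z
    rw [hΦ, sub_self, map_zero, norm_zero]
    norm_num
  -- norm of Φ x - Φ y squared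
  have hsq : ‖Φ x - Φ y‖ ^ 2 = 2 - 2 * Real.exp (-(t / 2) * c) := by
    have hx := hself x
    have hy := hself y
    rw [real_inner_self_eq_norm_sq] at hx hy
    rw [@norm_sub_sq_real, hx, hy, hΦ x y]
    ring
  have hexp : 1 - (t / 2 * c) ≤ Real.exp (-(t / 2) * c) := by
    have := Real.add_one_le_exp (-(t / 2 * c))
    have h : -(t / 2 * c) + 1 ≤ Real.exp (-(t / 2) * c) := by
      convert this using 2; ring
    linarith
  have hbound : ‖Φ x - Φ y‖ ^ 2 ≤ t * c := by
    rw [hsq]; nlinarith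
  have h1 : ‖Φ x - Φ y‖ ≤ Real.sqrt t * ‖T (x - y)‖ := by
    have : ‖Φ x - Φ y‖ ≤ Real.sqrt (t * c) := by
      rw [← Real.sqrt_sq (norm_nonneg (Φ x - Φ y))]
      exact Real.sqrt_le_sqrt hbound
    calc ‖Φ x - Φ y‖ ≤ Real.sqrt (t * c) := this
      _ = Real.sqrt t * ‖T (x - y)‖ := by
          rw [Real.sqrt_mul ht.le, hc, Real.sqrt_sq (norm_nonneg _)]
  calc |⟪f, Φ x⟫ - ⟪f, Φ y⟫| = |⟪f, Φ x - Φ y⟫| := by rw [inner_sub_right]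
    _ ≤ ‖f‖ * ‖Φ x - Φ y‖ := abs_real_inner_le_norm _ _
    _ ≤ ‖f‖ * (Real.sqrt t * (‖T‖ * ‖x - y‖)) := by
        refine mul_le_mul_of_nonneg_left ?_ (norm_nonneg f)
        exact le_trans h1 (mul_le_mul_of_nonneg_left (T.le_opNorm _) (Real.sqrt_nonneg t))
    _ = Real.sqrt t * ‖T‖ * ‖f‖ * ‖x - y‖ := by ring
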